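/- If a set A ⊆ ℕ has intrinsic density 1/2, then the set A ⊕ A = { 2n : n ∈ A } ∪ { 2n+1 : n ∈ A } also has intrinsic density 1/2. -/

import Mathlib

open Filter

/-- Partial density `ρ_n(S) = |S ∩ [0,n)| / n` (as a real number). -/
noncomputable def pden (S : Set ℕ) (n : ℕ) : ℝ := ((S ∩ Set.Iio n).ncard : ℝ) / n

/-- Partial functions `ℕ →. ℕ` computable relative to an oracle `O : ℕ → ℕ`
(oracle version of `Nat.Partrec`). -/
inductive RecursiveInOrc (O : ℕ → ℕ) : (ℕ →. ℕ) → Prop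
  | zero : RecursiveInOrc O (pure 0)
  | succ : RecursiveInOrc O ↑Nat.succ
  | left : RecursiveInOrc O ↑fun n : ℕ => n.unpair.1
  | right : RecursiveInOrc O ↑fun n : ℕ => n.unpair.2
  | oracle : RecursiveInOrc O ↑O
  | pair {f g} : RecursiveInOrc O f → RecursiveInOrc O g →
      RecursiveInOrc O fun n => Nat.pair <$> f n <*> g n
  | comp {f g} : RecursiveInOrc O f → RecursiveInOrc O g →
      RecursiveInOrc O fun n => g n >>= f
  | prec {f g} : RecursiveInOrc O f → RecursiveInOrc O g →
      RecursiveInOrc O (Nat.unpaired fun a n =>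
        n.rec (f a) fun y IH => do let i ← IH; g (Nat.pair a (Nat.pair y i)))
  | rfind {f} : RecursiveInOrc O f →
      RecursiveInOrc O fun a => Nat.rfind fun n => (fun m => m = 0) <$> f (Nat.pair a n)

open Classical in
/-- Characteristic function of a set of naturals. -/
noncomputable def chi (A : Set ℕ) : ℕ → ℕ := fun n => if n ∈ A then 1 else 0

/-- `f ≤_T A`: the function `f` is computable relative to the set `A`. -/
def FunLeT (f : ℕ → ℕ) (A : Set ℕ) : Prop := RecursiveInOrc (chi A) ↑f

/-- `S ≤_T A`: the set `S` is computable relative to the set `A` (Turing reducibility). -/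
def SetLeT (S A : Set ℕ) : Prop := RecursiveInOrc (chi A) ↑(chi S)

/-- `S ≡_T A`: Turing equivalence of sets. -/
def SetEquivT (S A : Set ℕ) : Prop := SetLeT S A ∧ SetLeT A S

/-- `S` has intrinsic density 0: every computable injection samples `S` with density 0. -/
def ID0 (S : Set ℕ) : Prop :=
  ∀ p : ℕ → ℕ, Computable p → Function.Injective p →
    Tendsto (fun n => pden (p ⁻¹' S) n) atTop (nhds 0)

/-- `S` has intrinsic lower density 0. -/
def ILD0 (S : Set ℕ) : Prop :=
  ∀ p : ℕ → ℕ, Computable p → Function.Injective p →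
    liminf (fun n => pden (p ⁻¹' S) n) atTop = 0

/-- `A` is weakly computably traceable. -/
def WCT (A : Set ℕ) : Prop :=
  ∃ h : ℕ → ℕ, Computable h ∧ ∀ f : ℕ → ℕ, FunLeT f A →
    ∃ V : ℕ → Finset ℕ, Computable V ∧ (∀ n, (V n).card ≤ h n) ∧
      ∃ᶠ n in atTop, f n ∈ V n

/-- `g` dominates every computable function. -/
def Dominant (g : ℕ → ℕ) : Prop :=
  ∀ f : ℕ → ℕ, Computable f → ∀ᶠ n in atTop, f n < g n

/-- `f` is diagonally non-computable. -/
def DNC (f : ℕ → ℕ) : Prop :=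
  ∀ e : ℕ, ∀ y ∈ (Denumerable.ofNat Nat.Partrec.Code e).eval e, f e ≠ y

/-- `S` has intrinsic density `d`: the image of `S` under every computable
permutation of `ℕ` has asymptotic density `d`. -/
def IntrinsicDensity (S : Set ℕ) (d : ℝ) : Prop :=
  ∀ π : ℕ → ℕ, Computable π → Function.Bijective π →
    Tendsto (fun n => pden (π '' S) n) atTop (nhds d)


lemma myInv {π : ℕ → ℕ} (hc : Computable π) (hb : Function.Bijective π) :
    ∃ g : ℕ → ℕ, Computable g ∧ (∀ m, π (g m) = m) ∧ (∀ k, g (π k) = k) := by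
  have hex : ∀ m, ∃ k, π k = m := hb.2
  refine ⟨fun m => Nat.find (hex m), ?_, fun m => Nat.find_spec (hex m),
    fun k => hb.1 (Nat.find_spec (hex (π k)))⟩
  have hdec : Computable (fun x : ℕ × ℕ => (decide (π x.2 = x.1) : Bool)) :=
    Primrec.eq.decide.to_comp.comp (hc.comp Computable.snd) Computable.fst
  have hpr : Partrec (fun m => Nat.rfind (fun k => Part.some (decide (π k = m)))) :=
    Partrec.rfind hdec.to₂.partrec₂
  apply hpr.of_eq_tot
  intro m
  refine Nat.mem_rfind.2 ?_
  constructor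
  · simp [Nat.find_spec (hex m)]
  · intro j hj
    simp only [Part.mem_some_iff]
    simp [Nat.find_min (hex m) hj]

lemma myCountComp {p : ℕ → Prop} [DecidablePred p]
    (hp : Computable fun n => (decide (p n) : Bool)) :
    Computable fun n => Nat.count p n := by
  have h0 : Computable (fun x : ℕ × (ℕ × ℕ) => (decide (p x.2.1) : Bool)) :=
    hp.comp (Computable.fst.comp Computable.snd)
  have h1 : Computable (fun x : ℕ × (ℕ × ℕ) => (if p x.2.1 then 1 else 0 : ℕ)) := by
    have := Computable.cond h0 (Computable.const 1) (Computable.const 0)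
    exact this.of_eq (by intro x; by_cases h : p x.2.1 <;> simp [h])
  have hstep : Computable (fun x : ℕ × (ℕ × ℕ) => x.2.2 + (if p x.2.1 then 1 else 0 : ℕ)) :=
    Primrec.nat_add.to_comp.comp (Computable.snd.comp Computable.snd) h1
  have := Computable.nat_rec (Computable.id (α := ℕ)) (Computable.const 0) hstep.to₂
  apply this.of_eq
  intro n
  induction n with
  | zero => simp [Nat.count_zero]
  | succ n ih => rw [Nat.count_succ, ← ih]; simp

lemma myCountLtIff {p : ℕ → Prop} [DecidablePred p] {m n : ℕ} (hm : p m) :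
    Nat.count p m < Nat.count p n ↔ m < n :=
  ⟨fun h => Nat.lt_of_count_lt_count h, fun h => Nat.count_strict_mono hm h⟩

lemma myCardEq {p : ℕ → Prop} [DecidablePred p] {q : ℕ → ℕ}
    (hq : ∀ a, p (q a)) (X : Set ℕ) (n : ℕ) :
    (((fun a => Nat.count p (q a)) '' X) ∩ Set.Iio (Nat.count p n)).ncard
      = ((q '' X) ∩ Set.Iio n).ncard := by
  have hset : ((fun a => Nat.count p (q a)) '' X) ∩ Set.Iio (Nat.count p n)
      = Nat.count p '' (q '' X ∩ Set.Iio n) := by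
    ext x
    constructor
    · rintro ⟨⟨a, ha, rfl⟩, hx⟩
      exact ⟨q a, ⟨⟨a, ha, rfl⟩, (myCountLtIff (hq a)).mp hx⟩, rfl⟩
    · rintro ⟨m, ⟨⟨a, ha, rfl⟩, hm⟩, rfl⟩
      exact ⟨⟨a, ha, rfl⟩, (myCountLtIff (hq a)).mpr hm⟩
  rw [hset]
  apply Set.ncard_image_of_injOn
  rintro x ⟨⟨a, _, rfl⟩, _⟩ y ⟨⟨b, _, rfl⟩, _⟩ h
  exact Nat.count_injective (hq a) (hq b) h

lemma myBij {p : ℕ → Prop} [DecidablePred p] {q : ℕ → ℕ}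
    (hq : ∀ a, p (q a)) (hqi : Function.Injective q)
    (hsur : ∀ m, p m → ∃ a, q a = m) (hinf : (setOf p).Infinite) :
    Function.Bijective (fun a => Nat.count p (q a)) := by
  constructor
  · intro a b h
    exact hqi (Nat.count_injective (hq a) (hq b) h)
  · intro k
    obtain ⟨a, ha⟩ := hsur (Nat.nth p k) (Nat.nth_mem_of_infinite hinf k)
    exact ⟨a, by simp [ha, Nat.count_nth_of_infinite hinf]⟩

lemma myCountTendsto {p : ℕ → Prop} [DecidablePred p] (hinf : (setOf p).Infinite) :
    Tendsto (fun n => Nat.count p n) atTop atTop :=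
  tendsto_atTop_atTop_of_monotone (Nat.count_monotone p)
    (fun b => ⟨Nat.nth p b + 1, by rw [Nat.count_nth_succ_of_infinite hinf]; omega⟩)

lemma myCountAdd {p q : ℕ → Prop} [DecidablePred p] [DecidablePred q]
    (h : ∀ m, q m ↔ ¬ p m) (n : ℕ) : Nat.count p n + Nat.count q n = n := by
  induction n with
  | zero => simp
  | succ n ih =>
    rw [Nat.count_succ, Nat.count_succ]
    by_cases hp : p n
    · rw [if_pos hp, if_neg (by simp [h n, hp])]; omega
    · rw [if_neg hp, if_pos ((h n).mpr hp)]; omega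

lemma myCombine {u v : ℕ → ℝ} {e o : ℕ → ℕ} {f : ℕ → ℝ}
    (hu : Tendsto u atTop (nhds (1/2))) (hv : Tendsto v atTop (nhds (1/2)))
    (he : Tendsto e atTop atTop) (ho : Tendsto o atTop atTop)
    (hsum : ∀ n, e n + o n = n)
    (hf : ∀ n, 1 ≤ n → f n = (u (e n) * e n + v (o n) * o n) / n) :
    Tendsto f atTop (nhds (1/2)) := by
  have hg : Tendsto (fun n => |u (e n) - 1/2| + |v (o n) - 1/2|) atTop (nhds 0) := by
    have h1 : Tendsto (fun n => |u (e n) - 1/2|) atTop (nhds 0) := by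
      have := ((hu.comp he).sub (tendsto_const_nhds (x := (1/2 : ℝ)))).abs
      simpa using this
    have h2 : Tendsto (fun n => |v (o n) - 1/2|) atTop (nhds 0) := by
      have := ((hv.comp ho).sub (tendsto_const_nhds (x := (1/2 : ℝ)))).abs
      simpa using this
    simpa using h1.add h2
  have hbound : ∀ᶠ n in atTop, |f n - 1/2| ≤ |u (e n) - 1/2| + |v (o n) - 1/2| := by
    filter_upwards [eventually_ge_atTop 1] with n hn
    have hn0 : (0:ℝ) < n := by exact_mod_cast hn
    have hsn : (e n : ℝ) + (o n : ℝ) = n := by exact_mod_cast hsum n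
    have hen : (0:ℝ) ≤ (e n : ℝ) := by positivity
    have hon : (0:ℝ) ≤ (o n : ℝ) := by positivity
    have hen1 : (e n : ℝ) / n ≤ 1 := by
      rw [div_le_one hn0]; linarith
    have hon1 : (o n : ℝ) / n ≤ 1 := by
      rw [div_le_one hn0]; linarith
    have hsplit : f n - 1/2 = (u (e n) - 1/2) * ((e n : ℝ) / n) + (v (o n) - 1/2) * ((o n : ℝ) / n) := by
      rw [hf n hn]
      field_simp
      ring_nf
      nlinarith [hsn]
    rw [hsplit]
    have h1 : |(u (e n) - 1/2) * ((e n : ℝ) / n)| ≤ |u (e n) - 1/2| := by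
      rw [abs_mul, abs_of_nonneg (div_nonneg hen hn0.le)]
      exact mul_le_of_le_one_right (abs_nonneg _) hen1
    have h2 : |(v (o n) - 1/2) * ((o n : ℝ) / n)| ≤ |v (o n) - 1/2| := by
      rw [abs_mul, abs_of_nonneg (div_nonneg hon hn0.le)]
      exact mul_le_of_le_one_right (abs_nonneg _) hon1
    exact (abs_add_le _ _).trans (add_le_add h1 h2)
  have : Tendsto (fun n => f n - 1/2) atTop (nhds 0) := by
    rw [tendsto_zero_iff_abs_tendsto_zero]
    exact squeeze_zero' (Eventually.of_forall fun n => abs_nonneg _) hbound hg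
  simpa using this.add (tendsto_const_nhds (x := (1/2 : ℝ)))

theorem stmt15 (A : Set ℕ) (hA : IntrinsicDensity A (1 / 2)) :
    IntrinsicDensity ({m : ℕ | ∃ n ∈ A, m = 2 * n} ∪ {m : ℕ | ∃ n ∈ A, m = 2 * n + 1})
      (1 / 2) := by
  intro π hπc hπb
  obtain ⟨g, hgc, hπg, hgπ⟩ := myInv hπc hπb
  have hq0 : ∀ a, (fun m => g m % 2 = 0) (π (2 * a)) := fun a => by
    simp only [hgπ]; omega
  have hq1 : ∀ a, (fun m => g m % 2 = 1) (π (2 * a + 1)) := fun a => by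
    simp only [hgπ]; omega
  have hq0i : Function.Injective (fun a => π (2 * a)) := fun a b h => by
    have := hπb.1 h; omega
  have hq1i : Function.Injective (fun a => π (2 * a + 1)) := fun a b h => by
    have := hπb.1 h; omega
  have hs0 : ∀ m, (fun m => g m % 2 = 0) m → ∃ a, (fun a => π (2 * a)) a = m := by
    intro m hm
    refine ⟨g m / 2, ?_⟩
    simp only []
    have h2 : 2 * (g m / 2) = g m := by omega
    rw [h2, hπg]
  have hs1 : ∀ m, (fun m => g m % 2 = 1) m → ∃ a, (fun a => π (2 * a + 1)) a = m := by
    intro m hm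
    refine ⟨g m / 2, ?_⟩
    simp only []
    have h2 : 2 * (g m / 2) + 1 = g m := by omega
    rw [h2, hπg]
  have hinf0 : (setOf (fun m => g m % 2 = 0)).Infinite :=
    Set.infinite_of_injective_forall_mem hq0i hq0
  have hinf1 : (setOf (fun m => g m % 2 = 1)).Infinite :=
    Set.infinite_of_injective_forall_mem hq1i hq1
  -- computability facts
  have hmod : Computable (fun n => g n % 2) :=
    Primrec.nat_mod.to_comp.comp hgc (Computable.const 2)
  have hdec0 : Computable (fun n => (decide (g n % 2 = 0) : Bool)) :=
    Primrec.eq.decide.to_comp.comp hmod (Computable.const 0)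
  have hdec1 : Computable (fun n => (decide (g n % 2 = 1) : Bool)) :=
    Primrec.eq.decide.to_comp.comp hmod (Computable.const 1)
  have hc0 : Computable (fun n => Nat.count (fun m => g m % 2 = 0) n) := myCountComp hdec0
  have hc1 : Computable (fun n => Nat.count (fun m => g m % 2 = 1) n) := myCountComp hdec1
  have hdbl : Computable (fun a : ℕ => 2 * a) :=
    Primrec.nat_mul.to_comp.comp (Computable.const 2) Computable.id
  have hdbl1 : Computable (fun a : ℕ => 2 * a + 1) :=
    Primrec.succ.to_comp.comp hdbl
  have hτ0c : Computable (fun a => Nat.count (fun m => g m % 2 = 0) (π (2 * a))) :=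
    hc0.comp (hπc.comp hdbl)
  have hτ1c : Computable (fun a => Nat.count (fun m => g m % 2 = 1) (π (2 * a + 1))) :=
    hc1.comp (hπc.comp hdbl1)
  have hτ0b : Function.Bijective (fun a => Nat.count (fun m => g m % 2 = 0) (π (2 * a))) :=
    myBij hq0 hq0i hs0 hinf0
  have hτ1b : Function.Bijective (fun a => Nat.count (fun m => g m % 2 = 1) (π (2 * a + 1))) :=
    myBij hq1 hq1i hs1 hinf1
  have h0 := hA _ hτ0c hτ0b
  have h1 := hA _ hτ1c hτ1b
  -- image decomposition
  have himg : π '' ({m : ℕ | ∃ n ∈ A, m = 2 * n} ∪ {m : ℕ | ∃ n ∈ A, m = 2 * n + 1})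
      = (fun a => π (2 * a)) '' A ∪ (fun a => π (2 * a + 1)) '' A := by
    rw [Set.image_union]
    congr 1
    · ext x
      simp only [Set.mem_image, Set.mem_setOf_eq]
      constructor
      · rintro ⟨m, ⟨a, ha, rfl⟩, rfl⟩; exact ⟨a, ha, rfl⟩
      · rintro ⟨a, ha, rfl⟩; exact ⟨2 * a, ⟨a, ha, rfl⟩, rfl⟩
    · ext x
      simp only [Set.mem_image, Set.mem_setOf_eq]
      constructor
      · rintro ⟨m, ⟨a, ha, rfl⟩, rfl⟩; exact ⟨a, ha, rfl⟩
      · rintro ⟨a, ha, rfl⟩; exact ⟨2 * a + 1, ⟨a, ha, rfl⟩, rfl⟩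
  have hdisj : ∀ n : ℕ,
      Disjoint ((fun a => π (2 * a)) '' A ∩ Set.Iio n)
        ((fun a => π (2 * a + 1)) '' A ∩ Set.Iio n) := by
    intro n
    rw [Set.disjoint_left]
    rintro x ⟨⟨a, _, rfl⟩, -⟩ ⟨⟨b, _, hbe⟩, -⟩
    have := hπb.1 hbe
    omega
  have hcard : ∀ n : ℕ,
      ((π '' ({m : ℕ | ∃ n ∈ A, m = 2 * n} ∪ {m : ℕ | ∃ n ∈ A, m = 2 * n + 1})) ∩ Set.Iio n).ncard
        = (((fun a => Nat.count (fun m => g m % 2 = 0) (π (2 * a))) '' A)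
            ∩ Set.Iio (Nat.count (fun m => g m % 2 = 0) n)).ncard
          + (((fun a => Nat.count (fun m => g m % 2 = 1) (π (2 * a + 1))) '' A)
            ∩ Set.Iio (Nat.count (fun m => g m % 2 = 1) n)).ncard := by
    intro n
    have e0 := myCardEq (p := fun m => g m % 2 = 0) (q := fun a => π (2 * a)) hq0 A n
    have e1 := myCardEq (p := fun m => g m % 2 = 1) (q := fun a => π (2 * a + 1)) hq1 A n
    rw [himg, Set.union_inter_distrib_right,
      Set.ncard_union_eq (hdisj n)
        ((Set.finite_Iio n).subset Set.inter_subset_right)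
        ((Set.finite_Iio n).subset Set.inter_subset_right),
      ← e0, ← e1]
  -- arithmetic on counts
  have hsum : ∀ n : ℕ, Nat.count (fun m => g m % 2 = 0) n
      + Nat.count (fun m => g m % 2 = 1) n = n :=
    myCountAdd (p := fun m => g m % 2 = 0) (q := fun m => g m % 2 = 1) (fun m => by omega)
  have he : Tendsto (fun n => Nat.count (fun m => g m % 2 = 0) n) atTop atTop :=
    myCountTendsto hinf0
  have ho : Tendsto (fun n => Nat.count (fun m => g m % 2 = 1) n) atTop atTop :=
    myCountTendsto hinf1
  -- key cast identity
  have key : ∀ (X : Set ℕ) (k : ℕ), pden X k * k = ((X ∩ Set.Iio k).ncard : ℝ) := by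
    intro X k
    rcases Nat.eq_zero_or_pos k with rfl | hk
    · have h0 : Set.Iio (0 : ℕ) = ∅ := by ext x; simp
      simp [pden, h0]
    · have hk' : (k : ℝ) ≠ 0 := by positivity
      rw [pden, div_mul_cancel₀ _ hk']
  refine myCombine h0 h1 he ho hsum ?_
  intro n hn
  show (((π '' ({m : ℕ | ∃ n ∈ A, m = 2 * n} ∪ {m : ℕ | ∃ n ∈ A, m = 2 * n + 1}))
      ∩ Set.Iio n).ncard : ℝ) / n = _
  rw [hcard n]
  push_cast
  rw [← key, ← key]
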